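/- arXiv:math/0401276 — 2 statements merged into one kernel-verified Lean document; each statement's English description precedes it below -/
import Mathlib

section
/- Let Γ be a group acting on a set E, Γ' ≤ Γ of finite index with coset representatives γ₁,…,γ_r of Γ'\Γ, and e ∈ E an element with stabilizer Γ_e (in Γ) and stabilizers Γ'_{γ_i e} (in Γ'). Then for each index i, the number of indices j with Γ'γ_i e = Γ'γ_j e equals #(Γ_e) / #(Γ'_{γ_i e}), assuming these stabilizers are finite. -/
/-- Let `Γ` act on a set `E`, `Γ' ≤ Γ` of finite index with coset
representatives `γ₁, …, γ_r` of `Γ'\Γ` (so each `g ∈ Γ` satisfies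
`Γ'γᵢ = Γ'g`, i.e. `g·γᵢ⁻¹ ∈ Γ'`, for exactly one `i`), and let `e ∈ E` have
finite stabilizers `Γ_e` in `Γ` and `Γ'_{γᵢe}` in `Γ'`.  Then for each `i`,
the number of indices `j` with `Γ'·(γᵢ e) = Γ'·(γⱼ e)` equals
`#Γ_e / #Γ'_{γᵢ e}`. -/
theorem card_coset_orbit_eq_card_stabilizer_div {G E : Type*} [Group G] [MulAction G E]
    (H : Subgroup G) (r : ℕ) (γ : Fin r → G)
    (hrep : ∀ g : G, ∃! i : Fin r, g * (γ i)⁻¹ ∈ H)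
    (e : E)
    (hfin : Finite (MulAction.stabilizer G e))
    (hfin' : ∀ i : Fin r, Finite (MulAction.stabilizer H (γ i • e)))
    (i : Fin r) :
    Nat.card {j : Fin r | MulAction.orbit H (γ j • e) = MulAction.orbit H (γ i • e)} =
      Nat.card (MulAction.stabilizer G e) /
        Nat.card (MulAction.stabilizer H (γ i • e)) := by
  classical
  set S := {j : Fin r | MulAction.orbit H (γ j • e) = MulAction.orbit H (γ i • e)} with hS
  -- choose for each j ∈ S an h j : H with h j • (γ j • e) = γ i • e
  have exh : ∀ j : S, ∃ h : H, (h : G) • (γ (j : Fin r) • e) = γ i • e := by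
    rintro ⟨j, hj⟩
    have : γ i • e ∈ MulAction.orbit H (γ j • e) := by
      rw [hj]; exact MulAction.mem_orbit_self _
    obtain ⟨h, hh⟩ := this
    exact ⟨h, hh⟩
  choose h hh using exh
  have hmem : ∀ (j : S) (k : MulAction.stabilizer H (γ i • e)),
      ((γ i)⁻¹ * ((k : H) : G) * ((h j : H) : G) * γ (j : Fin r)) ∈ MulAction.stabilizer G e := by
    intro j k
    have hk : ((k : H) : G) • (γ i • e) = γ i • e := k.2
    simp only [MulAction.mem_stabilizer_iff]
    calc ((γ i)⁻¹ * ((k : H) : G) * ((h j : H) : G) * γ (j : Fin r)) • e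
        = (γ i)⁻¹ • ((k : H) : G) • ((h j : H) : G) • γ (j : Fin r) • e := by
          simp [mul_smul]
      _ = e := by rw [hh j, hk, inv_smul_smul]
  set f : S × MulAction.stabilizer H (γ i • e) → MulAction.stabilizer G e :=
    fun p => ⟨(γ i)⁻¹ * ((p.2 : H) : G) * ((h p.1 : H) : G) * γ (p.1 : Fin r), hmem p.1 p.2⟩
    with hf
  have hbij : Function.Bijective f := by
    constructor
    · rintro ⟨j, k⟩ ⟨j', k'⟩ heq
      have heq' : (γ i)⁻¹ * ((k : H) : G) * ((h j : H) : G) * γ (j : Fin r) =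
          (γ i)⁻¹ * ((k' : H) : G) * ((h j' : H) : G) * γ (j' : Fin r) :=
        congrArg (Subtype.val) heq
      have hjP : (γ i * ((γ i)⁻¹ * ((k : H) : G) * ((h j : H) : G) * γ (j : Fin r))) *
          (γ (j : Fin r))⁻¹ ∈ H := by
        have e1 : (γ i * ((γ i)⁻¹ * ((k : H) : G) * ((h j : H) : G) * γ (j : Fin r))) *
            (γ (j : Fin r))⁻¹ = ((k : H) : G) * ((h j : H) : G) := by group
        rw [e1]; exact mul_mem (k : H).2 (h j).2
      have hj'P : (γ i * ((γ i)⁻¹ * ((k : H) : G) * ((h j : H) : G) * γ (j : Fin r))) *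
          (γ (j' : Fin r))⁻¹ ∈ H := by
        have e2 : (γ i * ((γ i)⁻¹ * ((k : H) : G) * ((h j : H) : G) * γ (j : Fin r))) *
            (γ (j' : Fin r))⁻¹ = ((k' : H) : G) * ((h j' : H) : G) := by
          rw [heq']; group
        rw [e2]; exact mul_mem (k' : H).2 (h j').2
      obtain ⟨w, -, huniq⟩ := hrep (γ i * ((γ i)⁻¹ * ((k : H) : G) * ((h j : H) : G) * γ (j : Fin r)))
      have hjj' : (j : Fin r) = (j' : Fin r) := by
        rw [huniq _ hjP, huniq _ hj'P]
      have hjj'' : j = j' := Subtype.ext hjj'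
      subst hjj''
      have hkk : ((k : H) : G) = ((k' : H) : G) := by
        have h3 := heq'
        rwa [mul_right_cancel_iff, mul_right_cancel_iff, mul_left_cancel_iff] at h3
      exact Prod.ext rfl (Subtype.ext (Subtype.ext hkk))
    · rintro ⟨s, hs⟩
      obtain ⟨j, hjH, -⟩ := hrep (γ i * s)
      have hse : s • e = e := hs
      have horb : γ i • e ∈ MulAction.orbit H (γ j • e) := by
        refine ⟨⟨γ i * s * (γ j)⁻¹, hjH⟩, ?_⟩
        show (γ i * s * (γ j)⁻¹) • (γ j • e) = γ i • e
        rw [← mul_smul, inv_mul_cancel_right, mul_smul, hse]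
      have hjS : j ∈ S := by
        rw [hS, Set.mem_setOf_eq]
        exact (MulAction.orbit_eq_iff.mpr horb).symm
      set j' : S := ⟨j, hjS⟩ with hj'
      set kG : G := (γ i * s * (γ j)⁻¹) * ((h j' : H) : G)⁻¹ with hkG
      have hkH : kG ∈ H := mul_mem hjH (inv_mem (h j').2)
      have hkstab : (⟨kG, hkH⟩ : H) ∈ MulAction.stabilizer H (γ i • e) := by
        show (⟨kG, hkH⟩ : H) • (γ i • e) = γ i • e
        show kG • (γ i • e) = γ i • e
        have h1 : ((h j' : H) : G) • (γ j • e) = γ i • e := hh j'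
        calc kG • (γ i • e)
            = (γ i * s * (γ j)⁻¹) • (((h j' : H) : G)⁻¹ • (γ i • e)) := by
              rw [hkG, mul_smul]
          _ = (γ i * s * (γ j)⁻¹) • (γ j • e) := by rw [← h1, inv_smul_smul]
          _ = γ i • (s • e) := by
              rw [← mul_smul, ← mul_smul, inv_mul_cancel_right, mul_smul]
          _ = γ i • e := by rw [hse]
      refine ⟨⟨j', ⟨⟨kG, hkH⟩, hkstab⟩⟩, ?_⟩
      apply Subtype.ext
      show (γ i)⁻¹ * kG * ((h j' : H) : G) * γ j = s
      rw [hkG]; group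
  have key : Nat.card (MulAction.stabilizer G e) =
      Nat.card S * Nat.card (MulAction.stabilizer H (γ i • e)) := by
    rw [← Nat.card_prod, Nat.card_congr (Equiv.ofBijective f hbij)]
  have hpos : 0 < Nat.card (MulAction.stabilizer H (γ i • e)) := by
    haveI := hfin' i
    exact Nat.card_pos
  rw [key, Nat.mul_div_cancel _ hpos]
end

section
/- Let μ be a ℤ-valued measure of total mass 0 on ℙ¹(F_𝔭) invariant under γ_ψ = diag(u,1) where ν_𝔭(u) = h > 0, and let z ∈ Ω_𝔭. Then the period I := ⨉∫_{ℙ¹(F_𝔭)} ((t−γ_ψz)/(t−z)) dμ(t) is independent of the choice of z. -/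
open scoped BigOperators
open OnePoint Classical
noncomputable section

section MulIntegral

variable {X : Type*} [TopologicalSpace X] {C : Type*} [NormedField C]

/-- A compact open subset. -/
def IsCompactOpen (U : Set X) : Prop := IsCompact U ∧ IsOpen U

/-- `P` is a finite partition of `A` into compact open subsets. -/
def IsCompactOpenPartition (A : Set X) (P : Finset (Set X)) : Prop :=
  (∀ U ∈ P, IsCompactOpen U) ∧ (⋃ U ∈ P, U) = A ∧
    (P : Set (Set X)).PairwiseDisjoint id

/-- `P` refines `Q`: every member of `P` is contained in some member of `Q`. -/
def PartitionRefines (P Q : Finset (Set X)) : Prop :=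
  ∀ U ∈ P, ∃ V ∈ Q, U ⊆ V

/-- `I` is the multiplicative integral `⨉∫_A f dμ`. -/
def IsMulIntegralOn (μ : Set X → ℤ) (f : X → C) (A : Set X) (I : C) : Prop :=
  ∀ ε : ℝ, 0 < ε → ∃ Q : Finset (Set X), IsCompactOpenPartition A Q ∧
    ∀ P : Finset (Set X), IsCompactOpenPartition A P → PartitionRefines P Q →
      ∀ t : Set X → X, (∀ U ∈ P, U.Nonempty → t U ∈ U) →
        ‖(∏ U ∈ P, f (t U) ^ μ U) - I‖ < ε

/-- The multiplicative integral over the whole space. -/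
def IsMulIntegral (μ : Set X → ℤ) (f : X → C) (I : C) : Prop :=
  IsMulIntegralOn μ f Set.univ I

end MulIntegral

/-!
The integrand is `f_z = r(u z, z)`, where `r(a, b)(t) = (t - a)/(t - b)` and `r(a, b)(∞) = 1`.
The cocycle relation `r(a, b) · r(b, c) = r(a, c)` and the equivariance `r(u a, u b) ∘ γ = r(a, b)`
give `f_z · (k ∘ γ) = f_{z'} · k` for `k = r(u z, u z')`. Since `μ` is `γ`-invariant, the Riemann
product of `k ∘ γ` over a partition `P` is that of `k` over `γ P`, so the Riemann products of `f_z`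
and `f_{z'}` over `P` differ by the ratio of those of `k` over `P` and over `γ P`. On partitions
into small balls and a neighbourhood of `∞`, `k` has multiplicative oscillation at most `δ` on
every piece, and then both products of `k` are within `δ` of the one over the common refinement:
in the ultrametric field `C` the elements at distance `≤ δ < 1` from `1` form a group, so the
errors do not accumulate over the pieces.

Such partitions exist when `Kp` is locally compact, hence proper, which is the case as soon as
some nonempty compact open set avoids `∞`. Otherwise the only nonempty piece of a partition is the
one containing `∞`, where both integrands equal `1`, and both periods are `1`.
-/

open Set Finset Metric

lemma zpow_sum₀ {G ι : Type*} [CommGroupWithZero G] {x : G} (hx : x ≠ 0) (s : Finset ι)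
    (m : ι → ℤ) : x ^ (∑ i ∈ s, m i) = ∏ i ∈ s, x ^ m i := by
  induction s using Finset.induction_on with
  | empty => simp
  | insert i s hi ih => rw [sum_insert hi, prod_insert hi, zpow_add₀ hx, ih]

section NearOne

variable {C : Type*} [NormedField C] [IsUltrametricDist C] {δ : ℝ} {x y : C}

lemma norm_eq_one_of_norm_sub_one_lt (h : ‖x - 1‖ < 1) : ‖x‖ = 1 := by
  have := IsUltrametricDist.norm_add_eq_max_of_norm_ne_norm (x := x - 1) (y := 1)
    (by rw [norm_one]; exact h.ne)
  rwa [sub_add_cancel, norm_one, max_eq_right h.le] at this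

lemma ne_zero_of_norm_sub_one_lt (h : ‖x - 1‖ < 1) : x ≠ 0 := by
  rw [← norm_ne_zero_iff, norm_eq_one_of_norm_sub_one_lt h]
  exact one_ne_zero

lemma norm_mul_sub_one_le (hδ : δ ≤ 1) (hx : ‖x - 1‖ ≤ δ) (hy : ‖y - 1‖ ≤ δ) :
    ‖x * y - 1‖ ≤ δ := by
  have hy1 : ‖y‖ ≤ 1 := by
    calc ‖y‖ = ‖(y - 1) + 1‖ := by rw [sub_add_cancel]
      _ ≤ max ‖y - 1‖ ‖(1 : C)‖ := IsUltrametricDist.norm_add_le_max _ _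
      _ ≤ 1 := by rw [norm_one]; exact max_le (hy.trans hδ) le_rfl
  calc ‖x * y - 1‖ = ‖(x - 1) * y + (y - 1)‖ := by ring_nf
    _ ≤ max ‖(x - 1) * y‖ ‖y - 1‖ := IsUltrametricDist.norm_add_le_max _ _
    _ ≤ δ := by
      rw [norm_mul]
      exact max_le ((mul_le_of_le_one_right (norm_nonneg _) hy1).trans hx) hy

lemma norm_inv_sub_one_le (hδ : δ < 1) (hx : ‖x - 1‖ ≤ δ) : ‖x⁻¹ - 1‖ ≤ δ := by
  have hx0 := ne_zero_of_norm_sub_one_lt (hx.trans_lt hδ)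
  calc ‖x⁻¹ - 1‖ = ‖-((x - 1) * x⁻¹)‖ := by congr 1; field_simp; ring
    _ = ‖x - 1‖ := by
      rw [norm_neg, norm_mul, norm_inv, norm_eq_one_of_norm_sub_one_lt (hx.trans_lt hδ), inv_one,
        mul_one]
    _ ≤ δ := hx

lemma norm_div_sub_one_le (hδ : δ < 1) (hx : ‖x - 1‖ ≤ δ) (hy : ‖y - 1‖ ≤ δ) :
    ‖x / y - 1‖ ≤ δ := by
  rw [div_eq_mul_inv]
  exact norm_mul_sub_one_le hδ.le hx (norm_inv_sub_one_le hδ hy)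

lemma norm_zpow_sub_one_le (hδ : δ < 1) (hx : ‖x - 1‖ ≤ δ) (m : ℤ) :
    ‖x ^ m - 1‖ ≤ δ := by
  have hx0 := ne_zero_of_norm_sub_one_lt (hx.trans_lt hδ)
  induction m using Int.induction_on with
  | zero => simpa using (norm_nonneg _).trans hx
  | succ n ih => rw [zpow_add_one₀ hx0]; exact norm_mul_sub_one_le hδ.le ih hx
  | pred n ih =>
    rw [zpow_sub_one₀ hx0]; exact norm_mul_sub_one_le hδ.le ih (norm_inv_sub_one_le hδ hx)

lemma norm_prod_sub_one_le {ι : Type*} {s : Finset ι} {f : ι → C} (hδ0 : 0 ≤ δ)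
    (hδ : δ ≤ 1) (h : ∀ i ∈ s, ‖f i - 1‖ ≤ δ) : ‖∏ i ∈ s, f i - 1‖ ≤ δ :=
  Finset.prod_induction f (fun x => ‖x - 1‖ ≤ δ) (fun _ _ => norm_mul_sub_one_le hδ)
    (by simpa using hδ0) h

end NearOne

lemma eq_of_forall_approximants_close {E : Type*} [NormedAddCommGroup E] {I I' : E}
    (h : ∀ δ : ℝ, 0 < δ → δ < 1 →
      ∃ Z Z' : E, ‖Z - I‖ < δ ∧ ‖Z' - I'‖ < δ ∧ ‖Z - Z'‖ ≤ δ * ‖Z'‖) :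
    I = I' := by
  have hbound : ∀ δ : ℝ, 0 < δ → δ < 1 → ‖I - I'‖ ≤ δ * (‖I'‖ + 3) := by
    intro δ hδ0 hδ1
    obtain ⟨Z, Z', hZ, hZ', hZZ'⟩ := h δ hδ0 hδ1
    have hZ'norm : ‖Z'‖ ≤ ‖I'‖ + 1 := by
      linarith [norm_le_norm_add_norm_sub' Z' I', norm_sub_rev Z' I']
    calc ‖I - I'‖ = ‖-(Z - I) + (Z - Z') + (Z' - I')‖ := by congr 1; abel
      _ ≤ ‖Z - I‖ + ‖Z - Z'‖ + ‖Z' - I'‖ := by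
        refine (norm_add₃_le).trans ?_; rw [norm_neg]
      _ ≤ δ * (‖I'‖ + 3) := by nlinarith
  refine eq_of_forall_dist_le fun ε hε => ?_
  set δ := min (1 / 2) (ε / (‖I'‖ + 3))
  have hδ0 : 0 < δ := lt_min (by norm_num) (by positivity)
  calc dist I I' = ‖I - I'‖ := dist_eq_norm I I'
    _ ≤ δ * (‖I'‖ + 3) := hbound δ hδ0 ((min_le_left _ _).trans_lt (by norm_num))
    _ ≤ ε / (‖I'‖ + 3) * (‖I'‖ + 3) := by gcongr; exact min_le_right _ _
    _ = ε := by field_simp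

section Refinement

variable {X : Type*} {P Q R : Finset (Set X)} {U : Set X}

lemma PartitionRefines.trans (hPQ : PartitionRefines P Q) (hQR : PartitionRefines Q R) :
    PartitionRefines P R := by
  intro U hU
  obtain ⟨V, hV, hUV⟩ := hPQ U hU
  obtain ⟨W, hW, hVW⟩ := hQR V hV
  exact ⟨W, hW, hUV.trans hVW⟩

def commonRefinement (P Q : Finset (Set X)) : Finset (Set X) :=
  (P ×ˢ Q).image fun W => W.1 ∩ W.2

lemma mem_commonRefinement :
    U ∈ commonRefinement P Q ↔ ∃ V ∈ P, ∃ W ∈ Q, V ∩ W = U := by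
  simp [commonRefinement, and_assoc]

lemma partitionRefines_commonRefinement_left : PartitionRefines (commonRefinement P Q) P := by
  intro U hU
  obtain ⟨V, hV, W, -, rfl⟩ := mem_commonRefinement.1 hU
  exact ⟨V, hV, inter_subset_left⟩

lemma partitionRefines_commonRefinement_right : PartitionRefines (commonRefinement P Q) Q := by
  intro U hU
  obtain ⟨V, -, W, hW, rfl⟩ := mem_commonRefinement.1 hU
  exact ⟨W, hW, inter_subset_right⟩

lemma exists_tag (X : Type*) [Nonempty X] :
    ∃ τ : Set X → X, ∀ S : Set X, S.Nonempty → τ S ∈ S :=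
  ⟨fun S => Classical.epsilon (· ∈ S), fun _ hS => Classical.epsilon_spec hS⟩

end Refinement

section Partitions

variable {X : Type*} [TopologicalSpace X] {P Q : Finset (Set X)} {U V : Set X}

def IsFinitelyAdditive (μ : Set X → ℤ) : Prop :=
  ∀ U V : Set X, IsCompactOpen U → IsCompactOpen V → Disjoint U V →
    μ (U ∪ V) = μ U + μ V

lemma IsCompactOpen.inter (hU : IsCompactOpen U) (hVc : IsClosed V) (hVo : IsOpen V) :
    IsCompactOpen (U ∩ V) :=
  ⟨hU.1.inter_right hVc, hU.2.inter hVo⟩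

lemma IsCompactOpenPartition.exists_mem (hP : IsCompactOpenPartition univ P) (p : X) :
    ∃ U ∈ P, p ∈ U := by
  obtain ⟨U, hU, hpU⟩ := mem_iUnion₂.1 (hP.2.1 ▸ mem_univ p)
  exact ⟨U, hU, hpU⟩

lemma IsCompactOpenPartition.isClosed_of_mem (hP : IsCompactOpenPartition univ P) (hV : V ∈ P) :
    IsClosed V := by
  have hcompl : Vᶜ = ⋃ W ∈ P.erase V, W := by
    ext p
    obtain ⟨W, hW, hpW⟩ := hP.exists_mem p
    simp only [mem_compl_iff, mem_iUnion, Finset.mem_erase, exists_prop]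
    constructor
    · intro hpV
      exact ⟨W, ⟨fun h => hpV (h ▸ hpW), hW⟩, hpW⟩
    · rintro ⟨W', ⟨hW'V, hW'⟩, hpW'⟩ hpV
      exact (hP.2.2 hW' hV hW'V).le_bot ⟨hpW', hpV⟩
  rw [← isOpen_compl_iff, hcompl]
  exact isOpen_biUnion fun W hW => (hP.1 W (Finset.mem_of_mem_erase hW)).2

lemma IsFinitelyAdditive.map_empty {μ : Set X → ℤ} (hμ : IsFinitelyAdditive μ) :
    μ ∅ = 0 := by
  have hempty : IsCompactOpen (∅ : Set X) := ⟨isCompact_empty, isOpen_empty⟩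
  have := hμ ∅ ∅ hempty hempty (disjoint_empty _)
  rw [union_empty] at this
  omega

lemma IsFinitelyAdditive.sum_inter {μ : Set X → ℤ} (hμ : IsFinitelyAdditive μ)
    (hU : IsCompactOpen U) (hP : IsCompactOpenPartition univ P) :
    ∑ V ∈ P, μ (U ∩ V) = μ U := by
  have hsub : ∀ F ⊆ P, ∑ V ∈ F, μ (U ∩ V) = μ (U ∩ ⋃ V ∈ F, V) := by
    intro F
    induction F using Finset.induction_on with
    | empty => simp [hμ.map_empty]
    | insert W F hWF ih =>
      intro hF
      have hW := hF (Finset.mem_insert_self W F)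
      have hFP : F ⊆ P := (Finset.subset_insert W F).trans hF
      rw [sum_insert hWF, ih hFP, Finset.set_biUnion_insert, inter_union_distrib_left]
      refine (hμ _ _ (hU.inter (hP.isClosed_of_mem hW) (hP.1 W hW).2)
        (hU.inter (isClosed_biUnion_finset fun V hV => hP.isClosed_of_mem (hFP hV))
          (isOpen_biUnion fun V hV => (hP.1 V (hFP hV)).2)) ?_).symm
      refine Disjoint.mono inter_subset_right inter_subset_right ?_
      exact disjoint_iUnion₂_right.2 fun V hV =>
        hP.2.2 hW (hFP hV) fun h => hWF (h ▸ hV)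
  rw [hsub P subset_rfl, hP.2.1, inter_univ]

lemma IsCompactOpenPartition.commonRefinement (hP : IsCompactOpenPartition univ P)
    (hQ : IsCompactOpenPartition univ Q) :
    IsCompactOpenPartition univ (commonRefinement P Q) := by
  refine ⟨?_, ?_, ?_⟩
  · intro U hU
    obtain ⟨V, hV, W, hW, rfl⟩ := mem_commonRefinement.1 hU
    exact (hP.1 V hV).inter (hQ.isClosed_of_mem hW) (hQ.1 W hW).2
  · refine eq_univ_of_forall fun p => ?_
    obtain ⟨V, hV, hpV⟩ := hP.exists_mem p
    obtain ⟨W, hW, hpW⟩ := hQ.exists_mem p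
    exact mem_biUnion (mem_commonRefinement.2 ⟨V, hV, W, hW, rfl⟩) ⟨hpV, hpW⟩
  · intro U hU U' hU' hne
    obtain ⟨V, hV, W, hW, rfl⟩ := mem_commonRefinement.1 hU
    obtain ⟨V', hV', W', hW', rfl⟩ := mem_commonRefinement.1 hU'
    by_cases hVV' : V = V'
    · have hWW' : W ≠ W' := fun h => hne (by rw [hVV', h])
      exact (hQ.2.2 hW hW' hWW').mono inter_subset_right inter_subset_right
    · exact (hP.2.2 hV hV' hVV').mono inter_subset_left inter_subset_left

lemma IsCompactOpenPartition.image {Y : Type*} [TopologicalSpace Y] (e : X ≃ₜ Y)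
    (hP : IsCompactOpenPartition univ P) :
    IsCompactOpenPartition univ (P.image (e '' ·)) := by
  refine ⟨?_, ?_, ?_⟩
  · intro V hV
    obtain ⟨U, hU, rfl⟩ := Finset.mem_image.1 hV
    exact ⟨(hP.1 U hU).1.image e.continuous, e.isOpenMap U (hP.1 U hU).2⟩
  · rw [Finset.set_biUnion_finset_image, ← image_iUnion₂, hP.2.1, image_univ, e.range_coe]
  · intro V hV V' hV' hne
    obtain ⟨U, hU, rfl⟩ := Finset.mem_image.1 hV
    obtain ⟨U', hU', rfl⟩ := Finset.mem_image.1 hV'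
    exact (disjoint_image_iff e.injective).2 (hP.2.2 hU hU' fun h => hne (h ▸ rfl))

end Partitions

section RiemannProducts

variable {X : Type*} {C : Type*} [NormedField C] {μ : Set X → ℤ}
  {P P' : Finset (Set X)} {U : Set X} {δ : ℝ}

def riemannProduct (μ : Set X → ℤ) (f : X → C) (P : Finset (Set X)) (τ : Set X → X) : C :=
  ∏ U ∈ P, f (τ U) ^ μ U

lemma riemannProduct_mul (f g : X → C) (τ : Set X → X) :
    riemannProduct μ (fun p => f p * g p) P τ =
      riemannProduct μ f P τ * riemannProduct μ g P τ := by
  simp only [riemannProduct, mul_zpow, prod_mul_distrib]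

lemma riemannProduct_ne_zero {g : X → C} (hg : ∀ p, g p ≠ 0) (τ : Set X → X) :
    riemannProduct μ g P τ ≠ 0 :=
  prod_ne_zero_iff.2 fun _ _ => zpow_ne_zero _ (hg _)

lemma riemannProduct_comp {φ : X → X} (hφ : Function.Injective φ)
    (hμ : ∀ V, μ (φ '' V) = μ V) (k : X → C) (τ : Set X → X) :
    riemannProduct μ (k ∘ φ) P τ =
      riemannProduct μ k (P.image (φ '' ·)) (fun V => φ (τ (φ ⁻¹' V))) := by
  rw [riemannProduct, riemannProduct, prod_image fun U _ V _ h => image_injective.2 hφ h]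
  exact prod_congr rfl fun U _ => by rw [preimage_image_eq U hφ, hμ, Function.comp_apply]

def MulOscillationLE (g : X → C) (δ : ℝ) (U : Set X) : Prop :=
  ∀ p ∈ U, ∀ q ∈ U, ‖g p / g q - 1‖ ≤ δ

lemma MulOscillationLE.ne_zero {g : X → C} (h : MulOscillationLE g δ U) (hδ : δ < 1) {p : X}
    (hp : p ∈ U) : g p ≠ 0 := by
  intro hgp
  have := h p hp p hp
  rw [hgp, div_zero, zero_sub, norm_neg, norm_one] at this
  linarith

lemma PartitionRefines.mulOscillationLE {g : X → C} (hPQ : PartitionRefines P P')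
    (hosc : ∀ V ∈ P', MulOscillationLE g δ V) : ∀ U ∈ P, MulOscillationLE g δ U := by
  intro U hU p hp q hq
  obtain ⟨V, hV, hUV⟩ := hPQ U hU
  exact hosc V hV p (hUV hp) q (hUV hq)

lemma mulOscillationLE_of_forall_norm_div_sub_one_le [IsUltrametricDist C] {g : X → C} {c : C}
    (hδ : δ < 1) (h : ∀ p ∈ U, ‖g p / c - 1‖ ≤ δ) : MulOscillationLE g δ U := by
  intro p hp q hq
  have hc : c ≠ 0 := by
    rintro rfl
    have := h p hp
    rw [div_zero, zero_sub, norm_neg, norm_one] at this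
    linarith
  have hgq : g q ≠ 0 := fun hgq => by
    have := h q hq
    rw [hgq, zero_div, zero_sub, norm_neg, norm_one] at this
    linarith
  rw [← div_div_div_cancel_right₀ hc (g p) (g q)]
  exact norm_div_sub_one_le hδ (h p hp) (h q hq)

variable [TopologicalSpace X]

lemma IsCompactOpenPartition.ne_zero_of_mulOscillationLE {g : X → C}
    (hP : IsCompactOpenPartition univ P) (hosc : ∀ U ∈ P, MulOscillationLE g δ U)
    (hδ : δ < 1) (p : X) : g p ≠ 0 := by
  obtain ⟨U, hU, hpU⟩ := hP.exists_mem p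
  exact (hosc U hU).ne_zero hδ hpU

variable [IsUltrametricDist C]

lemma norm_prod_inter_div_riemannProduct_sub_one_le (hμ : IsFinitelyAdditive μ)
    (hP : ∀ U ∈ P, IsCompactOpen U) (hP' : IsCompactOpenPartition univ P') {g : X → C}
    (hg : ∀ p, g p ≠ 0) (hδ0 : 0 ≤ δ) (hδ1 : δ < 1)
    (hosc : ∀ U ∈ P, MulOscillationLE g δ U) {σ τ : Set X → X}
    (hσ : ∀ U ∈ P, U.Nonempty → σ U ∈ U) (hτ : ∀ S : Set X, S.Nonempty → τ S ∈ S) :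
    ‖(∏ U ∈ P, ∏ V ∈ P', g (τ (U ∩ V)) ^ μ (U ∩ V)) / riemannProduct μ g P σ - 1‖ ≤
      δ := by
  -- `μ U = ∑ V, μ (U ∩ V)` turns the quotient into a product of factors within `δ` of `1`.
  have hsplit : riemannProduct μ g P σ = ∏ U ∈ P, ∏ V ∈ P', g (σ U) ^ μ (U ∩ V) :=
    prod_congr rfl fun U hU => by rw [← hμ.sum_inter (hP U hU) hP', zpow_sum₀ (hg _)]
  rw [hsplit, ← prod_div_distrib]
  refine norm_prod_sub_one_le hδ0 hδ1.le fun U hU => ?_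
  rw [← prod_div_distrib]
  refine norm_prod_sub_one_le hδ0 hδ1.le fun V _ => ?_
  rw [← div_zpow]
  rcases (U ∩ V).eq_empty_or_nonempty with hUV | hUV
  · simpa [hUV, hμ.map_empty] using hδ0
  · exact norm_zpow_sub_one_le hδ1 (hosc U hU _ (hτ _ hUV).1 _
      (hσ U hU (hUV.mono inter_subset_left))) _

theorem norm_riemannProduct_div_sub_one_le (hμ : IsFinitelyAdditive μ)
    (hP : IsCompactOpenPartition univ P) (hP' : IsCompactOpenPartition univ P') {g : X → C}
    (hδ0 : 0 ≤ δ) (hδ1 : δ < 1) (hosc : ∀ U ∈ P, MulOscillationLE g δ U)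
    (hosc' : ∀ U ∈ P', MulOscillationLE g δ U) {σ σ' : Set X → X}
    (hσ : ∀ U ∈ P, U.Nonempty → σ U ∈ U)
    (hσ' : ∀ U ∈ P', U.Nonempty → σ' U ∈ U) :
    ‖riemannProduct μ g P σ / riemannProduct μ g P' σ' - 1‖ ≤ δ := by
  have : Nonempty X := ⟨σ ∅⟩
  obtain ⟨τ, hτ⟩ := exists_tag X
  have hg := hP.ne_zero_of_mulOscillationLE hosc hδ1
  have hPD := norm_prod_inter_div_riemannProduct_sub_one_le hμ hP.1 hP' hg hδ0 hδ1 hosc hσ hτ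
  have hP'D :=
    norm_prod_inter_div_riemannProduct_sub_one_le hμ hP'.1 hP hg hδ0 hδ1 hosc' hσ' hτ
  have hD : ∏ V ∈ P', ∏ U ∈ P, g (τ (V ∩ U)) ^ μ (V ∩ U) =
      ∏ U ∈ P, ∏ V ∈ P', g (τ (U ∩ V)) ^ μ (U ∩ V) := by
    rw [prod_comm]; simp only [inter_comm]
  rw [hD] at hP'D
  have hD0 : ∏ U ∈ P, ∏ V ∈ P', g (τ (U ∩ V)) ^ μ (U ∩ V) ≠ 0 :=
    prod_ne_zero_iff.2 fun _ _ => prod_ne_zero_iff.2 fun _ _ => zpow_ne_zero _ (hg _)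
  rw [← div_div_div_cancel_left' _ _ hD0]
  exact norm_div_sub_one_le hδ1 hP'D hPD

theorem norm_riemannProduct_sub_le_of_mul_comp_eq (hμ : IsFinitelyAdditive μ) (e : X ≃ₜ X)
    (he : ∀ V, μ (e '' V) = μ V) (hP : IsCompactOpenPartition univ P) (hδ0 : 0 ≤ δ)
    (hδ1 : δ < 1) {f₁ f₂ k : X → C} (hcob : ∀ p, f₁ p * k (e p) = f₂ p * k p)
    (hk : ∀ U ∈ P, MulOscillationLE k δ U) (hke : ∀ U ∈ P, MulOscillationLE (k ∘ e) δ U)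
    {τ : Set X → X} (hτ : ∀ U ∈ P, U.Nonempty → τ U ∈ U) :
    ‖riemannProduct μ f₁ P τ - riemannProduct μ f₂ P τ‖ ≤
      δ * ‖riemannProduct μ f₂ P τ‖ := by
  set P' := P.image (e '' ·)
  set τ' : Set X → X := fun V => e (τ (e ⁻¹' V))
  have hP' : IsCompactOpenPartition univ P' := hP.image e
  have hτ' : ∀ V ∈ P', V.Nonempty → τ' V ∈ V := by
    intro V hV hVne
    obtain ⟨U, hU, rfl⟩ := Finset.mem_image.1 hV
    simp only [τ', preimage_image_eq U e.injective]
    exact mem_image_of_mem e (hτ U hU (image_nonempty.1 hVne))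
  have hk' : ∀ V ∈ P', MulOscillationLE k δ V := by
    intro V hV
    obtain ⟨U, hU, rfl⟩ := Finset.mem_image.1 hV
    rintro _ ⟨p, hp, rfl⟩ _ ⟨q, hq, rfl⟩
    exact hke U hU p hp q hq
  have hmul : riemannProduct μ f₁ P τ * riemannProduct μ k P' τ' =
      riemannProduct μ f₂ P τ * riemannProduct μ k P τ := by
    rw [← riemannProduct_comp e.injective he, ← riemannProduct_mul, ← riemannProduct_mul]
    exact congrArg (riemannProduct μ · P τ) (funext hcob)
  have hne : riemannProduct μ k P' τ' ≠ 0 :=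
    riemannProduct_ne_zero (hP'.ne_zero_of_mulOscillationLE hk' hδ1) τ'
  have hclose := norm_riemannProduct_div_sub_one_le hμ hP hP' hδ0 hδ1 hk hk' hτ hτ'
  calc ‖riemannProduct μ f₁ P τ - riemannProduct μ f₂ P τ‖
      = ‖riemannProduct μ f₂ P τ *
          (riemannProduct μ k P τ / riemannProduct μ k P' τ' - 1)‖ := by
        congr 1; field_simp; linear_combination hmul
    _ ≤ δ * ‖riemannProduct μ f₂ P τ‖ := by
        rw [norm_mul, mul_comm]; gcongr

end RiemannProducts

lemma IsMulIntegral.eq_one_of_isCompactOpen_eq_empty {X : Type*} [TopologicalSpace X]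
    {C : Type*} [NormedField C] {μ : Set X → ℤ} {f : X → C} {I : C} {x₀ : X}
    (hμ : IsFinitelyAdditive μ)
    (hX : ∀ U : Set X, IsCompactOpen U → x₀ ∉ U → U = ∅) (hf : f x₀ = 1)
    (hI : IsMulIntegral μ f I) : I = 1 := by
  refine eq_of_forall_dist_le fun ε hε => ?_
  obtain ⟨Q, hQ, hQI⟩ := hI ε hε
  have htag : ∀ U ∈ Q, U.Nonempty → x₀ ∈ U := fun U hU hne =>
    by_contra fun h => hne.ne_empty (hX U (hQ.1 U hU) h)
  have hprod : riemannProduct μ f Q (fun _ => x₀) = 1 := prod_eq_one fun U hU => by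
    by_cases h : x₀ ∈ U
    · rw [hf, one_zpow]
    · rw [hX U (hQ.1 U hU) h, hμ.map_empty, zpow_zero]
  have hclose : ‖riemannProduct μ f Q (fun _ => x₀) - I‖ < ε :=
    hQI Q hQ (fun U hU => ⟨U, hU, subset_rfl⟩) _ htag
  rw [hprod] at hclose
  rw [dist_eq_norm, norm_sub_rev]
  exact hclose.le

lemma properSpace_of_isCompactOpen {K : Type*} [NormedField K] (hK : ∃ x : K, 1 < ‖x‖)
    {U : Set (OnePoint K)} (hU : IsCompactOpen U) (hUinf : ∞ ∉ U) (hUne : U.Nonempty) :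
    ProperSpace K := by
  let : NontriviallyNormedField K := { ‹NormedField K› with non_trivial := hK }
  have hUrange : U ⊆ range ((↑) : K → OnePoint K) := fun p hp =>
    ne_infty_iff_exists.1 fun h => hUinf (h ▸ hp)
  have hcompact : IsCompact (((↑) : K → OnePoint K) ⁻¹' U) := by
    rw [isOpenEmbedding_coe.isEmbedding.isCompact_iff, image_preimage_eq_of_subset hUrange]
    exact hU.1
  obtain ⟨p, hp⟩ := hUne
  obtain ⟨t, rfl⟩ := hUrange hp
  have := hcompact.locallyCompactSpace_of_mem_nhds_of_addGroup
    ((hU.2.preimage continuous_coe).mem_nhds hp)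
  exact ProperSpace.of_nontriviallyNormedField_of_weaklyLocallyCompactSpace K

section ProperUltrametric

variable {Y : Type*} [PseudoMetricSpace Y] [ProperSpace Y] [IsUltrametricDist Y]

lemma isCompactOpen_compl_image_closedBall (y₀ : Y) {r : ℝ} (hr : r ≠ 0) :
    IsCompactOpen (((↑) : Y → OnePoint Y) '' closedBall y₀ r)ᶜ :=
  ⟨(isClosed_compl_iff.2 <| isOpen_image_coe.2 <|
      IsUltrametricDist.isOpen_closedBall y₀ hr).isCompact,
    isOpen_compl_iff.2 (isClosed_image_coe.2 ⟨isClosed_closedBall, isCompact_closedBall _ _⟩)⟩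

lemma isCompactOpen_image_ball (x : Y) (s : ℝ) :
    IsCompactOpen (((↑) : Y → OnePoint Y) '' ball x s) :=
  ⟨((isCompact_closedBall x s).of_isClosed_subset (IsUltrametricDist.isClosed_ball x s)
      ball_subset_closedBall).image continuous_coe,
    isOpen_image_coe.2 isOpen_ball⟩

lemma exists_partition_compl_closedBall_balls (y₀ : Y) {r s : ℝ} (hs : 0 < s) (hsr : s ≤ r) :
    ∃ P : Finset (Set (OnePoint Y)), IsCompactOpenPartition univ P ∧
      ∀ U ∈ P, U = (((↑) : Y → OnePoint Y) '' closedBall y₀ r)ᶜ ∨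
        ∃ x, ball x s ⊆ closedBall y₀ r ∧ U = (↑) '' ball x s := by
  obtain ⟨T, hT, hcover⟩ := (isCompact_closedBall y₀ r).elim_nhds_subcover (fun x => ball x s)
    fun x _ => ball_mem_nhds x hs
  have hsub : ∀ x ∈ T, ball x s ⊆ closedBall y₀ r := fun x hx => by
    rw [IsUltrametricDist.closedBall_eq_of_mem (hT x hx)]
    exact ball_subset_closedBall.trans (closedBall_subset_closedBall hsr)
  set F := (((↑) : Y → OnePoint Y) '' closedBall y₀ r)ᶜ
  refine ⟨insert F (T.image fun x => (↑) '' ball x s), ⟨?_, ?_, ?_⟩, ?_⟩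
  · intro U hU
    rcases Finset.mem_insert.1 hU with rfl | hU
    · exact isCompactOpen_compl_image_closedBall y₀ (hs.trans_le hsr).ne'
    · obtain ⟨x, -, rfl⟩ := Finset.mem_image.1 hU
      exact isCompactOpen_image_ball x s
  · refine eq_univ_of_forall fun p => ?_
    induction p using OnePoint.rec with
    | infty => exact mem_biUnion (Finset.mem_insert_self _ _) (by simp [F])
    | coe t =>
      by_cases ht : t ∈ closedBall y₀ r
      · obtain ⟨x, hx, htx⟩ := mem_iUnion₂.1 (hcover ht)
        exact mem_biUnion (Finset.mem_insert_of_mem (Finset.mem_image_of_mem _ hx))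
          (mem_image_of_mem _ htx)
      · exact mem_biUnion (Finset.mem_insert_self _ _) (by simpa [F] using ht)
  · rw [Finset.coe_insert, pairwiseDisjoint_insert]
    refine ⟨?_, ?_⟩
    · intro V hV V' hV' hne
      obtain ⟨x, -, rfl⟩ := Finset.mem_image.1 hV
      obtain ⟨x', -, rfl⟩ := Finset.mem_image.1 hV'
      have hballs : ball x s ≠ ball x' s := fun h => hne (by simp only [h])
      exact (disjoint_image_iff OnePoint.coe_injective).2
        ((IsUltrametricDist.ball_eq_or_disjoint x x' s).resolve_left hballs)
    · intro V hV _
      obtain ⟨x, hx, rfl⟩ := Finset.mem_image.1 hV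
      exact disjoint_compl_left_iff_subset.2 (image_mono (hsub x hx))
  · intro U hU
    rcases Finset.mem_insert.1 hU with rfl | hU
    · exact Or.inl rfl
    · obtain ⟨x, hx, rfl⟩ := Finset.mem_image.1 hU
      exact Or.inr ⟨x, hsub x hx, rfl⟩

end ProperUltrametric

section ProjectiveLine

variable {C : Type*} [NormedField C] {Kp : Subfield C} {a b c : C} {δ : ℝ}

def ratioFun (Kp : Subfield C) (a b : C) : OnePoint Kp → C :=
  fun p => p.elim 1 fun t => ((t : C) - a) / ((t : C) - b)

lemma ratioFun_mul_ratioFun (hb : b ∉ range ((↑) : Kp → C)) (p : OnePoint Kp) :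
    ratioFun Kp a b p * ratioFun Kp b c p = ratioFun Kp a c p := by
  induction p using OnePoint.rec with
  | infty => exact mul_one 1
  | coe t => exact div_mul_div_cancel₀ (sub_ne_zero.2 fun h => hb ⟨t, h⟩)

lemma ratioFun_mul_mul_onePointCongr {u : Kp} (hu : u ≠ 0) (a b : C) (p : OnePoint Kp) :
    ratioFun Kp (u * a) (u * b) ((Homeomorph.mulLeft₀ u hu).onePointCongr p) =
      ratioFun Kp a b p := by
  induction p using OnePoint.rec with
  | infty => rfl
  | coe t =>
    change ((u * t : Kp) - (u : C) * a) / ((u * t : Kp) - (u : C) * b) = ((t : C) - a) / (t - b)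
    rw [Subfield.coe_mul, ← mul_sub, ← mul_sub, mul_div_mul_left _ _ (by exact_mod_cast hu)]

lemma mul_notMem_range_coe {u : Kp} (hu : u ≠ 0) (ha : a ∉ range ((↑) : Kp → C)) :
    (u : C) * a ∉ range ((↑) : Kp → C) := by
  rintro ⟨t, ht⟩
  refine ha ⟨u⁻¹ * t, ?_⟩
  rw [Subfield.coe_mul, ht, Subfield.coe_inv, inv_mul_cancel_left₀ (by exact_mod_cast hu)]

lemma exists_pos_forall_le_norm_coe_sub {K : Set Kp} (hK : IsCompact K)
    (ha : a ∉ range ((↑) : Kp → C)) : ∃ d > 0, ∀ t ∈ K, d ≤ ‖(t : C) - a‖ := by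
  rcases K.eq_empty_or_nonempty with rfl | hne
  · exact ⟨1, one_pos, by simp⟩
  obtain ⟨t₀, -, hmin⟩ :=
    hK.exists_isMinOn hne (continuous_subtype_val.sub continuous_const).norm.continuousOn
  exact ⟨‖(t₀ : C) - a‖, norm_pos_iff.2 (sub_ne_zero.2 fun h => ha ⟨t₀, h⟩),
    fun t ht => hmin ht⟩

variable [IsUltrametricDist C]

lemma mulOscillationLE_ratioFun_compl_closedBall {r : ℝ} (hδ0 : 0 ≤ δ) (hδ1 : δ < 1)
    (hb : ‖b‖ < r) (hab : ‖a - b‖ ≤ δ * r) :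
    MulOscillationLE (ratioFun Kp a b) δ (((↑) : Kp → OnePoint Kp) '' closedBall 0 r)ᶜ := by
  refine mulOscillationLE_of_forall_norm_div_sub_one_le (c := 1) hδ1 fun p hp => ?_
  rw [div_one]
  induction p using OnePoint.rec with
  | infty => simpa [ratioFun] using hδ0
  | coe t =>
    have ht : r < ‖(t : C)‖ := by simpa using hp
    have htb : ‖(t : C) - b‖ = ‖(t : C)‖ := by
      have := IsUltrametricDist.norm_add_eq_max_of_norm_ne_norm (x := (t : C)) (y := -b)
        (by rw [norm_neg]; exact (hb.trans ht).ne')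
      rwa [← sub_eq_add_neg, norm_neg, max_eq_left (hb.trans ht).le] at this
    have htb0 : (t : C) - b ≠ 0 := norm_ne_zero_iff.1 (by rw [htb]; linarith [norm_nonneg b])
    change ‖((t : C) - a) / ((t : C) - b) - 1‖ ≤ δ
    rw [div_sub_one htb0, sub_sub_sub_cancel_left, norm_div, htb, norm_sub_rev,
      div_le_iff₀ (by linarith [norm_nonneg b])]
    nlinarith

lemma mulOscillationLE_ratioFun_ball {x : Kp} {s d : ℝ} (hδ1 : δ < 1) (hs : 0 < s) (hd : 0 < d)
    (hsd : s * ‖a - b‖ ≤ δ * (d * d))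
    (hdist : ∀ t ∈ ball x s, d ≤ ‖(t : C) - a‖ ∧ d ≤ ‖(t : C) - b‖) :
    MulOscillationLE (ratioFun Kp a b) δ (((↑) : Kp → OnePoint Kp) '' ball x s) := by
  refine mulOscillationLE_of_forall_norm_div_sub_one_le (c := ratioFun Kp a b x) hδ1 ?_
  rintro _ ⟨t, ht, rfl⟩
  obtain ⟨hxa, hxb⟩ := hdist x (mem_ball_self hs)
  have htb := (hdist t ht).2
  have hxa0 : (x : C) - a ≠ 0 := norm_pos_iff.1 (hd.trans_le hxa)
  have hxb0 : (x : C) - b ≠ 0 := norm_pos_iff.1 (hd.trans_le hxb)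
  have htb0 : (t : C) - b ≠ 0 := norm_pos_iff.1 (hd.trans_le htb)
  have htx : ‖(t : C) - x‖ < s := by rw [← mem_ball_iff_norm]; exact ht
  change ‖((t : C) - a) / ((t : C) - b) / (((x : C) - a) / ((x : C) - b)) - 1‖ ≤ δ
  have hid : ((t : C) - a) / ((t : C) - b) / (((x : C) - a) / ((x : C) - b)) - 1 =
      ((t : C) - x) * (a - b) / (((t : C) - b) * ((x : C) - a)) := by
    field_simp; ring
  rw [hid, norm_div, norm_mul, norm_mul, div_le_iff₀ (by positivity)]
  calc ‖(t : C) - x‖ * ‖a - b‖ ≤ s * ‖a - b‖ := by gcongr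
    _ ≤ δ * (d * d) := hsd
    _ ≤ δ * (‖(t : C) - b‖ * ‖(x : C) - a‖) := by
      have hδ0 : 0 ≤ δ := (mul_nonneg_iff_of_pos_right (mul_pos hd hd)).1
        ((mul_nonneg hs.le (norm_nonneg _)).trans hsd)
      gcongr

lemma exists_partition_mulOscillationLE_ratioFun [ProperSpace Kp]
    (ha : a ∉ range ((↑) : Kp → C)) (hb : b ∉ range ((↑) : Kp → C)) (hδ0 : 0 < δ)
    (hδ1 : δ < 1) :
    ∃ P : Finset (Set (OnePoint Kp)), IsCompactOpenPartition univ P ∧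
      ∀ U ∈ P, MulOscillationLE (ratioFun Kp a b) δ U := by
  -- Outside the ball of radius `r` the function is `δ`-close to its value `1` at `∞`; the small
  -- radius `s` is chosen against the distance `d` from that ball to `a` and `b`.
  set r := ‖b‖ + 1 + ‖a - b‖ / δ
  have hr : 0 ≤ ‖a - b‖ / δ := by positivity
  have hbr : ‖b‖ < r := by linarith
  have hab : ‖a - b‖ ≤ δ * r := by
    have : δ * (‖a - b‖ / δ) = ‖a - b‖ := mul_div_cancel₀ _ hδ0.ne'
    nlinarith [norm_nonneg b]
  obtain ⟨da, hda, hda'⟩ := exists_pos_forall_le_norm_coe_sub (isCompact_closedBall 0 r) ha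
  obtain ⟨db, hdb, hdb'⟩ := exists_pos_forall_le_norm_coe_sub (isCompact_closedBall 0 r) hb
  set d := min da db
  set s := min r (δ * (d * d) / (‖a - b‖ + 1))
  have hd : 0 < d := lt_min hda hdb
  have hs : 0 < s := lt_min ((norm_nonneg b).trans_lt hbr) (by positivity)
  have hsd : s * ‖a - b‖ ≤ δ * (d * d) := by
    have : s * (‖a - b‖ + 1) ≤ δ * (d * d) :=
      (le_div_iff₀ (by positivity)).1 (min_le_right _ _)
    nlinarith
  obtain ⟨P, hP, hPU⟩ := exists_partition_compl_closedBall_balls (0 : Kp) hs (min_le_left _ _)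
  refine ⟨P, hP, fun U hU => ?_⟩
  rcases hPU U hU with rfl | ⟨x, hx, rfl⟩
  · exact mulOscillationLE_ratioFun_compl_closedBall hδ0.le hδ1 hbr hab
  · exact mulOscillationLE_ratioFun_ball hδ1 hs hd hsd fun t ht =>
      ⟨(min_le_left _ _).trans (hda' t (hx ht)), (min_le_right _ _).trans (hdb' t (hx ht))⟩

theorem exists_partition_norm_riemannProduct_sub_le [ProperSpace Kp]
    {μ : Set (OnePoint Kp) → ℤ} (hμ : IsFinitelyAdditive μ) {u : Kp} (hu : u ≠ 0)
    (hγ : ∀ V, μ ((Homeomorph.mulLeft₀ u hu).onePointCongr '' V) = μ V) {z z' : C}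
    (hz : z ∉ range ((↑) : Kp → C)) (hz' : z' ∉ range ((↑) : Kp → C)) (hδ0 : 0 < δ)
    (hδ1 : δ < 1) {Q : Finset (Set (OnePoint Kp))} (hQ : IsCompactOpenPartition univ Q) :
    ∃ P, IsCompactOpenPartition univ P ∧ PartitionRefines P Q ∧
      ∀ τ : Set (OnePoint Kp) → OnePoint Kp, (∀ U ∈ P, U.Nonempty → τ U ∈ U) →
        ‖riemannProduct μ (ratioFun Kp (u * z) z) P τ -
            riemannProduct μ (ratioFun Kp (u * z') z') P τ‖ ≤
          δ * ‖riemannProduct μ (ratioFun Kp (u * z') z') P τ‖ := by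
  have huz := mul_notMem_range_coe hu hz
  have huz' := mul_notMem_range_coe hu hz'
  obtain ⟨P₁, hP₁, hosc₁⟩ := exists_partition_mulOscillationLE_ratioFun hz hz' hδ0 hδ1
  obtain ⟨P₂, hP₂, hosc₂⟩ := exists_partition_mulOscillationLE_ratioFun huz huz' hδ0 hδ1
  have hP₁₂ : PartitionRefines (commonRefinement Q (commonRefinement P₁ P₂))
      (commonRefinement P₁ P₂) := partitionRefines_commonRefinement_right
  refine ⟨_, hQ.commonRefinement (hP₁.commonRefinement hP₂),
    partitionRefines_commonRefinement_left, fun τ hτ => ?_⟩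
  refine norm_riemannProduct_sub_le_of_mul_comp_eq hμ _ hγ
    (hQ.commonRefinement (hP₁.commonRefinement hP₂)) hδ0.le hδ1
    (k := ratioFun Kp (u * z) (u * z')) (fun p => ?_)
    ((hP₁₂.trans partitionRefines_commonRefinement_right).mulOscillationLE hosc₂) ?_ hτ
  · rw [ratioFun_mul_mul_onePointCongr, ratioFun_mul_ratioFun hz,
      mul_comm (ratioFun Kp _ z' p), ratioFun_mul_ratioFun huz']
  · rw [show ratioFun Kp (u * z) (u * z') ∘ (Homeomorph.mulLeft₀ u hu).onePointCongr =
        ratioFun Kp z z' from funext (ratioFun_mul_mul_onePointCongr hu z z')]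
    exact (hP₁₂.trans partitionRefines_commonRefinement_left).mulOscillationLE hosc₁

end ProjectiveLine

theorem period_independent_of_basepoint_general {C : Type*} [NormedField C]
    [IsUltrametricDist C] (Kp : Subfield C)
    (μ : Set (OnePoint Kp) → ℤ)
    (hadd : ∀ U V : Set (OnePoint Kp), IsCompactOpen U → IsCompactOpen V →
      Disjoint U V → μ (U ∪ V) = μ U + μ V)
    (u : Kp) (hu0 : u ≠ 0) (hu1 : ‖(u : C)‖ < 1)
    (hinv : ∀ V : Set (OnePoint Kp),
      μ ((fun p : OnePoint Kp => p.elim OnePoint.infty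
        (fun t => OnePoint.some (u * t))) '' V) = μ V)
    (z z' : C)
    (hz : z ∉ Set.range (fun t : Kp => (t : C)))
    (hz' : z' ∉ Set.range (fun t : Kp => (t : C)))
    (I I' : C)
    (hI : IsMulIntegral μ
      (fun p : OnePoint Kp =>
        p.elim 1 (fun t => ((t : C) - (u : C) * z) / ((t : C) - z))) I)
    (hI' : IsMulIntegral μ
      (fun p : OnePoint Kp =>
        p.elim 1 (fun t => ((t : C) - (u : C) * z') / ((t : C) - z'))) I') :
    I = I' := by
  by_cases hdeg : ∀ U : Set (OnePoint Kp), IsCompactOpen U → ∞ ∉ U → U = ∅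
  · rw [hI.eq_one_of_isCompactOpen_eq_empty hadd hdeg rfl,
      hI'.eq_one_of_isCompactOpen_eq_empty hadd hdeg rfl]
  push Not at hdeg
  obtain ⟨U, hU, hUinf, hUne⟩ := hdeg
  have hunorm : 1 < ‖u⁻¹‖ := by
    rw [norm_inv]; exact one_lt_inv_iff₀.2 ⟨norm_pos_iff.2 hu0, hu1⟩
  have : ProperSpace Kp := properSpace_of_isCompactOpen ⟨u⁻¹, hunorm⟩ hU hUinf hUne
  have hγ : ∀ V, μ ((Homeomorph.mulLeft₀ u hu0).onePointCongr '' V) = μ V := fun V => by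
    convert hinv V using 3 with p
    induction p using OnePoint.rec <;> rfl
  refine eq_of_forall_approximants_close fun δ hδ0 hδ1 => ?_
  obtain ⟨Q, hQ, hQI⟩ := hI δ hδ0
  obtain ⟨Q', hQ', hQI'⟩ := hI' δ hδ0
  obtain ⟨P, hP, hPQ, hclose⟩ := exists_partition_norm_riemannProduct_sub_le hadd hu0 hγ hz hz'
    hδ0 hδ1 (hQ.commonRefinement hQ')
  obtain ⟨τ, hτ⟩ := exists_tag (OnePoint Kp)
  exact ⟨_, _, hQI P hP (hPQ.trans partitionRefines_commonRefinement_left) τ fun U _ => hτ U,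
    hQI' P hP (hPQ.trans partitionRefines_commonRefinement_right) τ fun U _ => hτ U,
    hclose τ fun U _ => hτ U⟩

/-- Lemma 3.1 of Hauer–Longhi.  Let `μ` be a `ℤ`-valued finitely additive
measure of total mass `0` on `ℙ¹(F_𝔭) = F_𝔭 ∪ {∞}`, invariant under the
Möbius action `t ↦ u·t`, `∞ ↦ ∞` of `γ_ψ = diag(u,1)`, where `ν_𝔭(u) = h > 0`
(i.e. `0 < ‖u‖ < 1`).  Then Darmon's period
`I = ⨉∫_{ℙ¹(F_𝔭)} ((t − γ_ψ z)/(t − z)) dμ(t)` (the integrand extended by `1`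
at `∞`) is independent of the choice of the base point `z ∈ Ω_𝔭`. -/
theorem period_independent_of_basepoint {C : Type*} [NormedField C]
    [CompleteSpace C] [IsUltrametricDist C] (Kp : Subfield C)
    (μ : Set (OnePoint Kp) → ℤ)
    (hadd : ∀ U V : Set (OnePoint Kp), IsCompactOpen U → IsCompactOpen V →
      Disjoint U V → μ (U ∪ V) = μ U + μ V)
    (hmass : μ Set.univ = 0)
    (u : Kp) (hu0 : u ≠ 0) (hu1 : ‖(u : C)‖ < 1)
    (hinv : ∀ V : Set (OnePoint Kp),
      μ ((fun p : OnePoint Kp => p.elim OnePoint.infty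
        (fun t => OnePoint.some (u * t))) '' V) = μ V)
    (z z' : C)
    (hz : z ∉ Set.range (fun t : Kp => (t : C)))
    (hz' : z' ∉ Set.range (fun t : Kp => (t : C)))
    (I I' : C)
    (hI : IsMulIntegral μ
      (fun p : OnePoint Kp =>
        p.elim 1 (fun t => ((t : C) - (u : C) * z) / ((t : C) - z))) I)
    (hI' : IsMulIntegral μ
      (fun p : OnePoint Kp =>
        p.elim 1 (fun t => ((t : C) - (u : C) * z') / ((t : C) - z'))) I') :
    I = I' :=
  period_independent_of_basepoint_general Kp μ hadd u hu0 hu1 hinv z z' hz hz' I I' hI hI'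
end
end
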